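/- Let S be a ℤ^k-graded ring with grading 𝒜 : (Fin k → ℤ) → AddSubgroup S, and define the S_0-valued inner product ⟨a, b⟩ to be the degree-0 homogeneous component of the product a * b. Then the inner product is right non-degenerate (i.e. ⟨a, s⟩ = 0 for all s ∈ S implies a = 0) if and only if for every v ∈ Fin k → ℤ and every non-zero x ∈ 𝒜 v there exists y ∈ 𝒜 (−v) with x * y ≠ 0. -/
import Mathlib

/-- Let `S` be a `ℤ^k`-graded ring with `S₀`-valued inner product
`⟨a, b⟩ = (a * b)₀` (the degree-`0` component of `a * b`).  The inner product is right
non-degenerate if and only if for every `v` and every non-zero `x ∈ 𝒜 v` there is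
`y ∈ 𝒜 (-v)` with `x * y ≠ 0`. -/
theorem inner_product_right_nondegenerate_iff
    {k : ℕ} {S : Type*} [Ring S] (𝒜 : (Fin k → ℤ) → AddSubgroup S) [GradedRing 𝒜] :
    (∀ a : S, (∀ s : S, (DirectSum.decompose 𝒜 (a * s) 0 : S) = 0) → a = 0) ↔
      (∀ v : Fin k → ℤ, ∀ x ∈ 𝒜 v, x ≠ 0 → ∃ y ∈ 𝒜 (-v), x * y ≠ 0) := by
  constructor
  · intro h v x hx hx0
    by_contra hcon
    push_neg at hcon
    refine hx0 (h x fun s => ?_)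
    have h0 : (0 : Fin k → ℤ) = v + (-v) := by ring
    rw [h0, DirectSum.coe_decompose_mul_add_of_left_mem 𝒜 hx,
      hcon _ (DirectSum.decompose 𝒜 s (-v)).2]
  · intro h a ha
    by_contra ha0
    obtain ⟨v, hv⟩ : ∃ v, (DirectSum.decompose 𝒜 a v : S) ≠ 0 := by
      by_contra hc
      push_neg at hc
      apply ha0
      classical
      rw [← DirectSum.sum_support_decompose 𝒜 a]
      exact Finset.sum_eq_zero fun v _ => hc v
    obtain ⟨y, hy, hxy⟩ := h v _ (DirectSum.decompose 𝒜 a v).2 hv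
    apply hxy
    have h0 : (0 : Fin k → ℤ) = v + (-v) := by ring
    have := ha y
    rwa [h0, DirectSum.coe_decompose_mul_add_of_right_mem 𝒜 hy] at this
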